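/- arXiv:math/0411084 — 4 statements merged into one kernel-verified Lean document; each statement's English description precedes it below -/
import Mathlib

section
/- Let K be an algebraically closed field, n, N positive integers with N > n, A = (a_0,…,a_N) a tuple of vectors in ℤ^n, and α = (α_0,…,α_N) ∈ (K^×)^{N+1}. Then the kernel I_{A,α} of the K-algebra homomorphism φ_{A,α} : K[x_0,…,x_N] → K[ℤ × ℤ^n] determined by φ_{A,α}(x_i) = α_i·u^{(1,a_i)} equals the ideal of K[x_0,…,x_N] generated by the binomials x^{b₊} − α^b·x^{b₋}, where b runs over Γ_A = ker η_A. -/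
open MvPolynomial

noncomputable section

/-- `Γ_A = ker η_A`, where `η_A(λ) = (∑ λ_i, ∑ λ_i a_i)`. -/
def gammaA (n N : ℕ) (a : Fin (N + 1) → Fin n → ℤ) : Set (Fin (N + 1) → ℤ) :=
  {b | (∑ i, b i) = 0 ∧ (∑ i, b i • a i) = 0}

/-- The `K`-algebra homomorphism `φ_{A,α} : K[x_0,…,x_N] → K[ℤ × ℤ^n]`
determined by `x_i ↦ α_i · u^{(1, a_i)}`. -/
def phiAalpha (K : Type*) [Field K] (n N : ℕ) (a : Fin (N + 1) → Fin n → ℤ)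
    (α : Fin (N + 1) → Kˣ) :
    MvPolynomial (Fin (N + 1)) K →ₐ[K] AddMonoidAlgebra K (ℤ × (Fin n → ℤ)) :=
  MvPolynomial.aeval fun i => AddMonoidAlgebra.single ((1 : ℤ), a i) (α i : K)

/-- The binomials `x^{b₊} − α^b · x^{b₋}` for `b ∈ Γ_A`. -/
def binomialGens (K : Type*) [Field K] (n N : ℕ) (a : Fin (N + 1) → Fin n → ℤ)
    (α : Fin (N + 1) → Kˣ) : Set (MvPolynomial (Fin (N + 1)) K) :=
  {f | ∃ b ∈ gammaA n N a, f =
      (∏ i, X i ^ (b i).toNat) -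
        C ((∏ i, α i ^ b i : Kˣ) : K) * ∏ i, X i ^ (-b i).toNat}

section Aux

variable {K : Type*} [Field K] {n N : ℕ} (a : Fin (N + 1) → Fin n → ℤ) (α : Fin (N + 1) → Kˣ)

def etaN (m : Fin (N + 1) → ℕ) : ℤ × (Fin n → ℤ) :=
  (∑ i, (m i : ℤ), ∑ i, (m i : ℤ) • a i)

lemma phi_prod_pow (m : Fin (N + 1) → ℕ) :
    phiAalpha K n N a α (∏ i, X i ^ m i) =
      AddMonoidAlgebra.single (etaN a m) ((∏ i, α i ^ m i : Kˣ) : K) := by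
  have : ∀ i : Fin (N + 1), phiAalpha K n N a α (X i ^ m i) =
      AddMonoidAlgebra.single ((m i : ℤ) • ((1 : ℤ), a i)) ((α i : K) ^ m i) := by
    intro i
    rw [map_pow, phiAalpha, aeval_X, AddMonoidAlgebra.single_pow, natCast_zsmul]
  rw [map_prod]
  simp_rw [this]
  rw [AddMonoidAlgebra.prod_single]
  congr 1
  · rw [etaN]
    ext
    · simp [Prod.fst_sum]
    · simp [Prod.snd_sum]
  · push_cast
    rfl

lemma monomial_eq_prod (m : Fin (N + 1) →₀ ℕ) (c : K) :
    (monomial m c : MvPolynomial (Fin (N + 1)) K) = C c * ∏ i, X i ^ m i := by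
  rw [monomial_eq]
  congr 1
  exact Finsupp.prod_fintype _ _ fun i => pow_zero _

lemma phi_monomial (m : Fin (N + 1) →₀ ℕ) (c : K) :
    phiAalpha K n N a α (monomial m c) =
      AddMonoidAlgebra.single (etaN a m) (c * ((∏ i, α i ^ (m i : ℕ) : Kˣ) : K)) := by
  rw [monomial_eq_prod, map_mul, phi_prod_pow, algHom_C]
  rw [show (algebraMap K (AddMonoidAlgebra K (ℤ × (Fin n → ℤ)))) c =
    AddMonoidAlgebra.single 0 c from rfl]
  rw [AddMonoidAlgebra.single_mul_single, zero_add]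

lemma etaN_pos_eq_neg {b : Fin (N + 1) → ℤ} (hb : b ∈ gammaA n N a) :
    etaN a (fun i => (b i).toNat) = etaN a (fun i => (-b i).toNat) := by
  obtain ⟨h1, h2⟩ := hb
  have key : ∀ i, ((b i).toNat : ℤ) = b i + ((-b i).toNat : ℤ) := fun i => by omega
  rw [etaN, etaN, Prod.mk.injEq]
  constructor
  · simp_rw [key]
    rw [Finset.sum_add_distrib, h1, zero_add]
  · simp_rw [key, add_smul]
    rw [Finset.sum_add_distrib, h2, zero_add]

lemma alpha_pos_eq {b : Fin (N + 1) → ℤ} :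
    (∏ i, α i ^ (b i).toNat) = (∏ i, α i ^ b i) * ∏ i, α i ^ (-b i).toNat := by
  rw [← Finset.prod_mul_distrib]
  refine Finset.prod_congr rfl fun i _ => ?_
  rw [← zpow_natCast (α i) (b i).toNat, ← zpow_natCast (α i) (-b i).toNat, ← zpow_add]
  congr 1
  omega

lemma alpha_split (m m' : Fin (N + 1) → ℕ) :
    (∏ i, α i ^ m i : Kˣ) =
      (∏ i, α i ^ ((m i : ℤ) - (m' i : ℤ))) * ∏ i, α i ^ m' i := by
  rw [← Finset.prod_mul_distrib]
  refine Finset.prod_congr rfl fun i _ => ?_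
  rw [← zpow_natCast (α i) (m i), ← zpow_natCast (α i) (m' i), ← zpow_add]
  congr 1
  omega

lemma phi_gen_eq_zero {f : MvPolynomial (Fin (N + 1)) K}
    (hf : f ∈ binomialGens K n N a α) : phiAalpha K n N a α f = 0 := by
  obtain ⟨b, hb, rfl⟩ := hf
  rw [map_sub, map_mul, phi_prod_pow, phi_prod_pow, algHom_C]
  rw [show (algebraMap K (AddMonoidAlgebra K (ℤ × (Fin n → ℤ))))
      ((∏ i, α i ^ b i : Kˣ) : K) = AddMonoidAlgebra.single 0 ((∏ i, α i ^ b i : Kˣ) : K)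
    from rfl]
  rw [AddMonoidAlgebra.single_mul_single, zero_add, etaN_pos_eq_neg a hb, sub_eq_zero]
  congr 1
  rw [alpha_pos_eq α]
  push_cast
  ring

lemma phi_apply_coeff (f : MvPolynomial (Fin (N + 1)) K) (γ : ℤ × (Fin n → ℤ)) :
    (phiAalpha K n N a α f).coeff γ =
      ∑ m ∈ f.support,
        if etaN a m = γ then coeff m f * ((∏ i, α i ^ (m i : ℕ) : Kˣ) : K) else 0 := by
  conv_lhs => rw [f.as_sum, map_sum]
  rw [AddMonoidAlgebra.coeff_sum, Finsupp.finset_sum_apply]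
  refine Finset.sum_congr rfl fun m hm => ?_
  rw [phi_monomial, AddMonoidAlgebra.coeff_single, Finsupp.single_apply]

/-- key step: a "binomial difference of monomials with equal eta" lies in the span. -/
lemma step_mem (m m' : Fin (N + 1) →₀ ℕ) (c : K)
    (h : etaN a (fun i => m i) = etaN a (fun i => m' i)) :
    (monomial m c : MvPolynomial (Fin (N + 1)) K) -
      monomial m' (c * ((∏ i, α i ^ ((m i : ℤ) - (m' i : ℤ)) : Kˣ) : K)) ∈
      Ideal.span (binomialGens K n N a α) := by
  set b : Fin (N + 1) → ℤ := fun i => (m i : ℤ) - (m' i : ℤ) with hbdef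
  have hb : b ∈ gammaA n N a := by
    rw [etaN, etaN, Prod.mk.injEq] at h
    constructor
    · rw [show (∑ i, b i) = (∑ i, (m i : ℤ)) - ∑ i, (m' i : ℤ) by
        rw [← Finset.sum_sub_distrib]]
      rw [h.1, sub_self]
    · rw [show (∑ i, b i • a i) = (∑ i, (m i : ℤ) • a i) - ∑ i, (m' i : ℤ) • a i by
        rw [← Finset.sum_sub_distrib]
        exact Finset.sum_congr rfl fun i _ => by rw [sub_smul]]
      rw [h.2, sub_self]
  have hgen : (∏ i, X i ^ (b i).toNat) -
      C ((∏ i, α i ^ b i : Kˣ) : K) * ∏ i, X i ^ (-b i).toNat ∈ binomialGens K n N a α :=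
    ⟨b, hb, rfl⟩
  have e1 : (∏ i, X i ^ (m i : ℕ) : MvPolynomial (Fin (N + 1)) K) =
      (∏ i, X i ^ (min (m i) (m' i))) * ∏ i, X i ^ (b i).toNat := by
    rw [← Finset.prod_mul_distrib]
    refine Finset.prod_congr rfl fun i _ => ?_
    rw [← pow_add]
    congr 1
    simp only [hbdef]
    omega
  have e2 : (∏ i, X i ^ (m' i : ℕ) : MvPolynomial (Fin (N + 1)) K) =
      (∏ i, X i ^ (min (m i) (m' i))) * ∏ i, X i ^ (-b i).toNat := by
    rw [← Finset.prod_mul_distrib]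
    refine Finset.prod_congr rfl fun i _ => ?_
    rw [← pow_add]
    congr 1
    simp only [hbdef]
    omega
  have key : (monomial m c : MvPolynomial (Fin (N + 1)) K) -
      monomial m' (c * ((∏ i, α i ^ b i : Kˣ) : K)) =
      (C c * ∏ i, X i ^ (min (m i) (m' i))) *
        ((∏ i, X i ^ (b i).toNat) -
          C ((∏ i, α i ^ b i : Kˣ) : K) * ∏ i, X i ^ (-b i).toNat) := by
    rw [monomial_eq_prod, monomial_eq_prod, e1, e2, map_mul]
    ring
  rw [key]
  exact Ideal.mul_mem_left _ _ (Ideal.subset_span hgen)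

lemma mem_span_of_phi_eq_zero (k : ℕ) (f : MvPolynomial (Fin (N + 1)) K)
    (hk : f.support.card = k) (hf : phiAalpha K n N a α f = 0) :
    f ∈ Ideal.span (binomialGens K n N a α) := by
  induction k using Nat.strong_induction_on generalizing f with
  | _ k ih =>
    rcases eq_or_ne f 0 with rfl | hf0
    · exact Ideal.zero_mem _
    obtain ⟨m, hm⟩ := (support_nonempty.mpr hf0 : f.support.Nonempty)
    have hcm : coeff m f ≠ 0 := mem_support_iff.mp hm
    -- there is another monomial with the same eta
    have hex : ∃ m' ∈ f.support, m' ≠ m ∧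
        etaN a (fun i => m' i) = etaN a (fun i => m i) := by
      by_contra hcon
      push_neg at hcon
      have h0 : (0 : K) = ∑ m' ∈ f.support,
          if etaN a (fun i => (m' i : ℕ)) = etaN a (fun i => (m i : ℕ)) then
            coeff m' f * ((∏ i, α i ^ (m' i : ℕ) : Kˣ) : K) else 0 := by
        rw [← phi_apply_coeff, hf]
        rfl
      rw [Finset.sum_eq_single_of_mem m hm (fun m' h' hne' => by
        rw [if_neg (hcon m' h' hne')]), if_pos rfl] at h0
      exact (mul_ne_zero hcm (Units.ne_zero _)) h0.symm
    obtain ⟨m', hm's, hne, hη⟩ := hex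
    set c := coeff m f with hc
    set cb : K := ((∏ i, α i ^ ((m i : ℤ) - (m' i : ℤ)) : Kˣ) : K) with hcb
    set g : MvPolynomial (Fin (N + 1)) K :=
      monomial m c - monomial m' (c * cb) with hg
    have hgI : g ∈ Ideal.span (binomialGens K n N a α) := step_mem a α m m' c hη.symm
    have hgker : phiAalpha K n N a α g = 0 := by
      rw [hg, map_sub, phi_monomial, phi_monomial, hη, sub_eq_zero]
      congr 1
      rw [hcb, mul_assoc]
      congr 1
      rw [← Units.val_mul, ← alpha_split α (fun i => m i) (fun i => m' i)]
    have hsub : (f - g).support ⊆ f.support.erase m := by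
      intro p hp
      rw [mem_support_iff] at hp
      rw [hg, coeff_sub, coeff_sub, coeff_monomial, coeff_monomial] at hp
      rw [Finset.mem_erase, mem_support_iff]
      constructor
      · rintro rfl
        rw [if_pos rfl, if_neg (fun hcontra => hne hcontra), sub_zero, hc, sub_self] at hp
        exact hp rfl
      · intro hpz
        rcases eq_or_ne m p with rfl | h1
        · rw [if_pos rfl, if_neg (fun hcontra => hne hcontra), sub_zero, hpz, hc] at hp
          exact hcm hpz
        · rcases eq_or_ne m' p with rfl | h2
          · exact (mem_support_iff.mp hm's) hpz
          · rw [if_neg h1, if_neg h2, hpz] at hp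
            simp at hp
    have hcard : (f - g).support.card < k := by
      calc (f - g).support.card ≤ (f.support.erase m).card := Finset.card_le_card hsub
        _ < f.support.card := Finset.card_erase_lt_of_mem hm
        _ = k := hk
    have h2 : f - g ∈ Ideal.span (binomialGens K n N a α) :=
      ih _ hcard (f - g) rfl (by rw [map_sub, hf, hgker, sub_zero])
    have : f = (f - g) + g := by ring
    rw [this]
    exact Ideal.add_mem _ h2 hgI

end Aux

/-- the kernel of `φ_{A,α}` is generated by the binomials
`x^{b₊} − α^b x^{b₋}`, `b ∈ Γ_A`. -/
theorem toric_ideal_eq_span_binomials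
    (K : Type*) [Field K] [IsAlgClosed K] (n N : ℕ) (hn : 0 < n) (hnN : n < N)
    (a : Fin (N + 1) → Fin n → ℤ) (α : Fin (N + 1) → Kˣ) :
    RingHom.ker (phiAalpha K n N a α).toRingHom =
      Ideal.span (binomialGens K n N a α) := by
  refine le_antisymm ?_ ?_
  · intro f hf
    exact mem_span_of_phi_eq_zero a α f.support.card f rfl (RingHom.mem_ker.mp hf)
  · rw [Ideal.span_le]
    intro g hg
    exact RingHom.mem_ker.mpr (phi_gen_eq_zero a α hg)


end
end

section
/- Let K be a field, N ≥ 1, Γ a subgroup of ℤ^{N+1}, and ρ : Γ → K^× a group homomorphism. Then the binomial ideal I(Γ,ρ) := (x^{b₊} − ρ(b)·x^{b₋} : b ∈ Γ) ⊆ K[x_0,…,x_N] is a homogeneous ideal for the total-degree grading if and only if Γ ⊆ Δ^ℤ, i.e. every b ∈ Γ satisfies b_0 + ⋯ + b_N = 0. -/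
open MvPolynomial

attribute [local instance] MvPolynomial.gradedAlgebra

/-- The units of an algebraically closed field form a divisible group. -/
noncomputable def algClosedUnitsDivisible (L : Type*) [Field L] [IsAlgClosed L] :
    DivisibleBy (Additive Lˣ) ℤ :=
  divisibleByOfSMulRightSurj _ _ (by
    intro n hn a
    obtain ⟨z, hz⟩ := IsAlgClosed.exists_pow_nat_eq ((Additive.toMul a : Lˣ) : L)
      (n := n.natAbs) (Int.natAbs_pos.mpr hn)
    have hz0 : z ≠ 0 := by
      intro h
      rw [h, zero_pow (by simpa using hn)] at hz
      exact (Units.ne_zero _) hz.symm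
    set w : Lˣ := Units.mk0 z hz0 with hw
    have hwk : w ^ n.natAbs = Additive.toMul a := by
      ext
      push_cast [hw]
      exact hz
    rcases Int.natAbs_eq n with h | h
    · refine ⟨Additive.ofMul w, ?_⟩
      apply Additive.toMul.injective
      rw [toMul_zsmul, toMul_ofMul, h, zpow_natCast, hwk]
    · refine ⟨Additive.ofMul w⁻¹, ?_⟩
      apply Additive.toMul.injective
      rw [toMul_zsmul, toMul_ofMul, h, zpow_neg, inv_zpow, inv_inv, zpow_natCast, hwk])

lemma sum_toNat_sub_sum_toNat_neg {n : ℕ} (v : Fin n → ℤ) :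
    ((∑ i, (v i).toNat : ℕ) : ℤ) - ((∑ i, (-(v i)).toNat : ℕ) : ℤ) = ∑ i, v i := by
  push_cast
  rw [← Finset.sum_sub_distrib]
  refine Finset.sum_congr rfl fun i _ => ?_
  omega

set_option maxHeartbeats 2000000 in
/-- for a subgroup `Γ ⊆ ℤ^{N+1}` and a partial character
`ρ : Γ → Kˣ`, the binomial ideal `I(Γ,ρ) = (x^{b₊} − ρ(b)·x^{b₋} : b ∈ Γ)` is
homogeneous for the total-degree grading iff every `b ∈ Γ` satisfies
`b_0 + ⋯ + b_N = 0`. -/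
theorem binomial_ideal_homogeneous_iff
    (K : Type*) [Field K] (N : ℕ) (hN : 0 < N)
    (Γ : AddSubgroup (Fin (N + 1) → ℤ)) (ρ : Γ →+ Additive Kˣ) :
    Ideal.IsHomogeneous (homogeneousSubmodule (Fin (N + 1)) K)
      (Ideal.span {f : MvPolynomial (Fin (N + 1)) K | ∃ b : Γ, f =
        (∏ i, X i ^ ((b : Fin (N + 1) → ℤ) i).toNat) -
          C ((Additive.toMul (ρ b) : Kˣ) : K) *
            ∏ i, X i ^ (-(b : Fin (N + 1) → ℤ) i).toNat}) ↔
    ∀ b ∈ Γ, (∑ i, b i) = 0 := by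
  classical
  set S : Set (MvPolynomial (Fin (N + 1)) K) := {f | ∃ b : Γ, f =
      (∏ i, X i ^ ((b : Fin (N + 1) → ℤ) i).toNat) -
        C ((Additive.toMul (ρ b) : Kˣ) : K) *
          ∏ i, X i ^ (-(b : Fin (N + 1) → ℤ) i).toNat} with hSdef
  constructor
  · intro hI b hb
    by_contra hs
    -- Build the twisted group algebra map killing the ideal but not monomials.
    set L := AlgebraicClosure K
    letI : DivisibleBy (Additive Lˣ) ℤ := algClosedUnitsDivisible L
    obtain ⟨r, hr⟩ := (Module.Baer.of_divisible (Additive Lˣ)).extension_property_addMonoidHom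
      Γ.subtype Subtype.val_injective
      ((MonoidHom.toAdditive (Units.map (algebraMap K L).toMonoidHom)).comp ρ)
    set Q := (Fin (N + 1) → ℤ) ⧸ Γ
    set A := AddMonoidAlgebra L Q with hA
    set c : (Fin (N + 1) → ℤ) → L := fun a => ((Additive.toMul (r a) : Lˣ) : L) with hcdef
    have hc : ∀ a a', c (a + a') = c a * c a' := by
      intro a a'
      simp [hcdef, map_add]
    have hcb : ∀ (β : Γ), c β = algebraMap K L ((Additive.toMul (ρ β) : Kˣ) : K) := by
      intro β
      have h := DFunLike.congr_fun hr β
      simp only [AddMonoidHom.comp_apply] at h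
      rw [hcdef]
      show ((Additive.toMul (r (Γ.subtype β)) : Lˣ) : L) = _
      rw [h]
      rfl
    set ψ : (Fin (N + 1) → ℤ) → A :=
      fun a => AddMonoidAlgebra.single (QuotientAddGroup.mk a : Q) (c a) with hψdef
    have hψmul : ∀ a a', ψ (a + a') = ψ a * ψ a' := by
      intro a a'
      simp only [hψdef]
      rw [AddMonoidAlgebra.single_mul_single, hc, QuotientAddGroup.mk_add]
    have hψone : ψ 0 = 1 := by
      have hc0 : c 0 = 1 := by simp [hcdef]
      rw [hψdef]
      simp only [hc0, QuotientAddGroup.mk_zero]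
      rfl
    set Ψ : Multiplicative (Fin (N + 1) → ℤ) →* A :=
      { toFun := fun a => ψ (Multiplicative.toAdd a),
        map_one' := hψone,
        map_mul' := fun a a' => hψmul _ _ } with hΨdef
    set φ : MvPolynomial (Fin (N + 1)) K →ₐ[K] A :=
      aeval (fun i => ψ (Pi.single i 1)) with hφdef
    have hφmon : ∀ u : Fin (N + 1) → ℕ, φ (∏ i, X i ^ u i) = ψ (fun i => (u i : ℤ)) := by
      intro u
      have hw : (∑ i, Pi.single i ((u i : ℤ)) : Fin (N + 1) → ℤ) = fun i => (u i : ℤ) :=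
        Finset.univ_sum_single _
      calc φ (∏ i, X i ^ u i)
          = ∏ i, ψ (Pi.single i 1) ^ u i := by
            rw [hφdef, map_prod]; simp only [map_pow, aeval_X]
        _ = ∏ i, Ψ (Multiplicative.ofAdd (Pi.single i (1 : ℤ))) ^ u i := rfl
        _ = Ψ (∏ i, Multiplicative.ofAdd (Pi.single i (1 : ℤ)) ^ u i) := by
            rw [map_prod]
            exact Finset.prod_congr rfl fun i _ => (map_pow Ψ _ _).symm
        _ = Ψ (Multiplicative.ofAdd (∑ i, (u i) • Pi.single i (1 : ℤ))) := by
            rw [ofAdd_sum]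
            congr 1
        _ = ψ (∑ i, (u i) • Pi.single i (1 : ℤ)) := by rfl
        _ = ψ (fun i => (u i : ℤ)) := by
            congr 1
            rw [← hw]
            refine Finset.sum_congr rfl fun i _ => ?_
            rw [← Pi.single_smul]
            simp
    have hker : ∀ f ∈ S, φ f = 0 := by
      rintro f ⟨β, rfl⟩
      rw [map_sub, map_mul, hφmon, hφmon, aeval_C]
      set pz : Fin (N + 1) → ℤ := fun i => (((β : Fin (N + 1) → ℤ) i).toNat : ℤ)
      set mz : Fin (N + 1) → ℤ := fun i => ((-(β : Fin (N + 1) → ℤ) i).toNat : ℤ)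
      have hsplit : pz = (β : Fin (N + 1) → ℤ) + mz := by
        funext i
        simp only [pz, mz, Pi.add_apply]
        omega
      have hmk : (QuotientAddGroup.mk pz : Q) = QuotientAddGroup.mk mz := by
        rw [hsplit, QuotientAddGroup.mk_add]
        rw [show (QuotientAddGroup.mk (β : Fin (N + 1) → ℤ) : Q) = 0 from
          (QuotientAddGroup.eq_zero_iff _).mpr β.2, zero_add]
      have hcp : c pz = algebraMap K L ((Additive.toMul (ρ β) : Kˣ) : K) * c mz := by
        rw [hsplit, hc, hcb]
      have halg : (algebraMap K A) ((Additive.toMul (ρ β) : Kˣ) : K) * ψ mz =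
          AddMonoidAlgebra.single (QuotientAddGroup.mk mz : Q)
            (algebraMap K L ((Additive.toMul (ρ β) : Kˣ) : K) * c mz) := by
        rw [show (algebraMap K A) ((Additive.toMul (ρ β) : Kˣ) : K) =
            AddMonoidAlgebra.single (0 : Q) (algebraMap K L ((Additive.toMul (ρ β) : Kˣ) : K))
          from rfl, hψdef]
        rw [AddMonoidAlgebra.single_mul_single, zero_add]
      rw [halg, hψdef]
      simp only [hmk, hcp]
      exact sub_self _
    have hIker : Ideal.span S ≤ RingHom.ker (φ : MvPolynomial (Fin (N + 1)) K →+* A) :=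
      Ideal.span_le.mpr fun f hf => by
        rw [SetLike.mem_coe, RingHom.mem_ker]
        exact hker f hf
    -- homogeneity argument
    set β : Γ := ⟨b, hb⟩
    set p : Fin (N + 1) → ℕ := fun i => (b i).toNat with hp
    set m : Fin (N + 1) → ℕ := fun i => (-(b i)).toNat with hm
    have hD : (∑ i, p i) ≠ (∑ i, m i) := by
      intro h
      apply hs
      have := sum_toNat_sub_sum_toNat_neg b
      rw [← this, hp, hm] at *
      simp only [h] at this ⊢
      omega
    have hmemP : (∏ i, X i ^ p i) ∈
        homogeneousSubmodule (Fin (N + 1)) K (∑ i, p i) := by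
      rw [mem_homogeneousSubmodule]
      exact MvPolynomial.IsHomogeneous.prod _ _ _ fun i _ => isHomogeneous_X_pow _ _
    have hmemM : (C ((Additive.toMul (ρ β) : Kˣ) : K) * ∏ i, X i ^ m i) ∈
        homogeneousSubmodule (Fin (N + 1)) K (∑ i, m i) := by
      rw [mem_homogeneousSubmodule]
      exact (MvPolynomial.IsHomogeneous.prod _ _ _ fun i _ =>
        isHomogeneous_X_pow _ _).C_mul _
    have hfS : (∏ i, X i ^ p i) -
        C ((Additive.toMul (ρ β) : Kˣ) : K) * ∏ i, X i ^ m i ∈ Ideal.span S :=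
      Ideal.subset_span ⟨β, rfl⟩
    have hdec := hI (∑ i, p i) hfS
    have hde : (DirectSum.decompose (homogeneousSubmodule (Fin (N + 1)) K)
        ((∏ i, X i ^ p i) - C ((Additive.toMul (ρ β) : Kˣ) : K) * ∏ i, X i ^ m i)
        (∑ i, p i) : MvPolynomial (Fin (N + 1)) K) = ∏ i, X i ^ p i := by
      rw [DirectSum.decompose_sub]
      rw [DirectSum.sub_apply, AddSubgroupClass.coe_sub,
        DirectSum.decompose_of_mem_same _ hmemP,
        DirectSum.decompose_of_mem_ne _ hmemM (Ne.symm hD), sub_zero]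
    rw [hde] at hdec
    have h0 : φ (∏ i, X i ^ p i) = 0 := hIker hdec
    rw [hφmon] at h0
    have := AddMonoidAlgebra.single_eq_zero.mp h0
    exact Units.ne_zero _ this
  · intro hΓ
    apply Ideal.homogeneous_span
    rintro f ⟨β, rfl⟩
    refine ⟨∑ i, ((β : Fin (N + 1) → ℤ) i).toNat, ?_⟩
    rw [mem_homogeneousSubmodule]
    have hsum := hΓ (β : Fin (N + 1) → ℤ) β.2
    have hDD : (∑ i, ((β : Fin (N + 1) → ℤ) i).toNat) =
        (∑ i, (-(β : Fin (N + 1) → ℤ) i).toNat) := by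
      have := sum_toNat_sub_sum_toNat_neg (β : Fin (N + 1) → ℤ)
      omega
    refine MvPolynomial.IsHomogeneous.sub
      (MvPolynomial.IsHomogeneous.prod _ _ _ fun i _ => isHomogeneous_X_pow _ _) ?_
    rw [hDD]
    exact (MvPolynomial.IsHomogeneous.prod _ _ _ fun i _ => isHomogeneous_X_pow _ _).C_mul _
end

section
/- Let n, N be positive integers with N > n and A = (a_0,…,a_N) a tuple of vectors in ℤ^n whose differences a_1 − a_0, …, a_N − a_0 generate ℤ^n (so that η_A is surjective and Γ_A := ker η_A is a saturated subgroup of ℤ^{N+1} of rank N − n). Regard Γ_A as a lattice in the real subspace W := ker(η_A ⊗ ℝ) ⊆ ℝ^{N+1}, W being equipped with the Euclidean structure induced by the standard inner product of ℝ^{N+1}. Then the covolume of Γ_A in W (the (N−n)-dimensional volume of a fundamental domain) equals (Σ_J det(M_J)²)^{1/2}, where M is the (n+1)×(N+1) integer matrix whose j-th column is (1, a_j) ∈ ℤ × ℤ^n, and the sum runs over all (n+1)-element subsets J of {0,…,N}, M_J denoting the square submatrix of M on the columns indexed by J. -/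
noncomputable section

/-- The linear map `η_A : ℤ^{N+1} → ℤ × ℤ^n`,
`λ ↦ (λ_0 + ⋯ + λ_N, λ_0 a_0 + ⋯ + λ_N a_N)`. -/
def etaLin (n N : ℕ) (a : Fin (N + 1) → Fin n → ℤ) :
    (Fin (N + 1) → ℤ) →ₗ[ℤ] ℤ × (Fin n → ℤ) where
  toFun lam := (∑ i, lam i, ∑ i, lam i • a i)
  map_add' x y := by
    simp [Prod.ext_iff, Finset.sum_add_distrib, add_smul]
  map_smul' c x := by
    simp [Prod.ext_iff, Finset.mul_sum, mul_smul, Finset.smul_sum]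

/-- The sum of the squares of the maximal minors of an `(n+1) × (N+1)`
matrix `M`: the sum over all `(n+1)`-element subsets `J` of the columns of
`det(M_J)²`. -/
def minorSumSq (n N : ℕ) (M : Matrix (Fin (n + 1)) (Fin (N + 1)) ℝ) : ℝ :=
  ∑ J ∈ (Finset.powersetCard (n + 1) (Finset.univ : Finset (Fin (N + 1)))).attach,
    (M.submatrix id fun k : Fin (n + 1) =>
        ((J.1.orderIsoOfFin (Finset.mem_powersetCard.mp J.2).2 k : J.1) :
          Fin (N + 1))).det ^ 2

open Finset Equiv Matrix in
theorem my_cauchy_binet {R : Type*} [CommRing R] {m q : ℕ}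
    (A : Matrix (Fin m) (Fin q) R) (B : Matrix (Fin q) (Fin m) R) :
    det (A * B) = ∑ J ∈ (powersetCard m (univ : Finset (Fin q))).attach,
      det (A.submatrix id fun k => ((J.1.orderIsoOfFin (mem_powersetCard.mp J.2).2 k : J.1) : Fin q))
      * det (B.submatrix (fun k => ((J.1.orderIsoOfFin (mem_powersetCard.mp J.2).2 k : J.1) : Fin q)) id) := by
  classical
  have step1 : det (A * B) = ∑ p : Fin m → Fin q,
      det (A.submatrix id p) * ∏ i, B (p i) i := by
    calc det (A * B)
        = ∑ σ : Perm (Fin m), Perm.sign σ • ∏ i, ∑ k, A (σ i) k * B k i := by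
          simp [det_apply, mul_apply, Units.smul_def]
      _ = ∑ σ : Perm (Fin m), Perm.sign σ • ∑ p : Fin m → Fin q,
            ∏ i, A (σ i) (p i) * B (p i) i := by
          simp [Finset.prod_univ_sum, Fintype.piFinset_univ]
      _ = ∑ p : Fin m → Fin q, ∑ σ : Perm (Fin m),
            Perm.sign σ • ((∏ i, A (σ i) (p i)) * ∏ i, B (p i) i) := by
          rw [Finset.sum_comm]
          simp [Finset.smul_sum, Finset.prod_mul_distrib]
      _ = ∑ p : Fin m → Fin q, det (A.submatrix id p) * ∏ i, B (p i) i := by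
          refine Finset.sum_congr rfl fun p _ => ?_
          rw [det_apply, Finset.sum_mul]
          refine Finset.sum_congr rfl fun σ _ => ?_
          simp [smul_mul_assoc, submatrix_apply]
  have step2 : det (A * B) = ∑ p ∈ (univ : Finset (Fin m → Fin q)).filter
      (fun p => Function.Injective p), det (A.submatrix id p) * ∏ i, B (p i) i := by
    rw [step1]
    refine (Finset.sum_subset (filter_subset _ _) fun p _ hp => ?_).symm
    have hpi : ¬ Function.Injective p := by simpa using hp
    obtain ⟨i, j, hij, hne⟩ := Function.not_injective_iff.mp hpi
    have : det (A.submatrix id p) = 0 := by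
      rw [← det_transpose]
      exact det_zero_of_row_eq hne (by ext k; simp [hij])
    rw [this, zero_mul]
  rw [step2]
  -- expand each J-term into a sum over permutations
  have expand : ∀ J : {x // x ∈ powersetCard m (univ : Finset (Fin q))},
      det (A.submatrix id fun k => ((J.1.orderIsoOfFin (mem_powersetCard.mp J.2).2 k : J.1) : Fin q))
      * det (B.submatrix (fun k => ((J.1.orderIsoOfFin (mem_powersetCard.mp J.2).2 k : J.1) : Fin q)) id)
      = ∑ τ : Perm (Fin m),
        det (A.submatrix id fun k => ((J.1.orderIsoOfFin (mem_powersetCard.mp J.2).2 (τ k) : J.1) : Fin q))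
        * ∏ i, B ((J.1.orderIsoOfFin (mem_powersetCard.mp J.2).2 (τ i) : J.1) : Fin q) i := by
    intro J
    have hA : ∀ τ : Perm (Fin m), det (A.submatrix id fun k =>
        ((J.1.orderIsoOfFin (mem_powersetCard.mp J.2).2 (τ k) : J.1) : Fin q)) =
        (Perm.sign τ : ℤ) * det (A.submatrix id fun k =>
        ((J.1.orderIsoOfFin (mem_powersetCard.mp J.2).2 k : J.1) : Fin q)) := by
      intro τ
      rw [← det_permute' τ]
      rfl
    have hB : det (B.submatrix (fun k =>
        ((J.1.orderIsoOfFin (mem_powersetCard.mp J.2).2 k : J.1) : Fin q)) id) =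
        ∑ τ : Perm (Fin m), Perm.sign τ •
          ∏ i, B ((J.1.orderIsoOfFin (mem_powersetCard.mp J.2).2 (τ i) : J.1) : Fin q) i := by
      rw [det_apply]; rfl
    rw [hB, Finset.mul_sum]
    refine Finset.sum_congr rfl fun τ _ => ?_
    rw [hA τ]
    simp only [smul_mul_assoc, mul_smul_comm, Units.smul_def, zsmul_eq_mul]
    ring
  simp_rw [expand]
  rw [← Finset.sum_product']
  refine (Finset.sum_bij (i := fun x _ =>
      fun k => ((x.1.1.orderIsoOfFin (mem_powersetCard.mp x.1.2).2 (x.2 k) : x.1.1) : Fin q))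
      ?_ ?_ ?_ ?_).symm
  · rintro ⟨J, τ⟩ -
    simp only [mem_filter, mem_univ, true_and]
    intro k l hkl
    exact τ.injective ((J.1.orderIsoOfFin _).injective (Subtype.ext hkl))
  · intro x hx y hy heq
    obtain ⟨J, τ⟩ := x
    obtain ⟨J', τ'⟩ := y
    simp only at heq
    have himg : ∀ (K : {x // x ∈ powersetCard m (univ : Finset (Fin q))}) (σ : Perm (Fin m)),
        Finset.image (fun k => ((K.1.orderIsoOfFin (mem_powersetCard.mp K.2).2 (σ k) : K.1) : Fin q)) univ = K.1 := by
      intro K σ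
      ext x
      simp only [mem_image, mem_univ, true_and]
      constructor
      · rintro ⟨k, rfl⟩; exact (K.1.orderIsoOfFin _ (σ k)).2
      · intro hx
        exact ⟨σ.symm ((K.1.orderIsoOfFin (mem_powersetCard.mp K.2).2).symm ⟨x, hx⟩), by simp⟩
    have hJJ : J = J' := by
      apply Subtype.ext
      rw [← himg J τ, ← himg J' τ', heq]
    subst hJJ
    have hττ : τ = τ' := by
      ext k
      exact congrArg Fin.val ((J.1.orderIsoOfFin _).injective (Subtype.ext (congrFun heq k)))
    rw [hττ]
  · intro p hp
    have hpi : Function.Injective p := by simpa using hp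
    have hJ : (Finset.image p univ) ∈ powersetCard m (univ : Finset (Fin q)) := by
      rw [mem_powersetCard]
      exact ⟨subset_univ _, by rw [Finset.card_image_of_injective _ hpi, card_univ, Fintype.card_fin]⟩
    set J : {x // x ∈ powersetCard m (univ : Finset (Fin q))} := ⟨Finset.image p univ, hJ⟩ with hJdef
    have hg : Function.Injective (fun k =>
        (J.1.orderIsoOfFin (mem_powersetCard.mp J.2).2).symm ⟨p k, Finset.mem_image_of_mem p (mem_univ k)⟩) := by
      intro k l hkl
      apply hpi
      have h2 : (⟨p k, _⟩ : J.1) = (⟨p l, _⟩ : J.1) :=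
        (J.1.orderIsoOfFin (mem_powersetCard.mp J.2).2).symm.injective hkl
      exact congrArg Subtype.val h2
    have hgb : Function.Bijective _ := (Finite.injective_iff_bijective).mp hg
    refine ⟨⟨J, Equiv.ofBijective _ hgb⟩, mem_product.mpr ⟨mem_attach _ _, mem_univ _⟩, ?_⟩
    funext k
    simp only [Equiv.ofBijective_apply]
    rw [OrderIso.apply_symm_apply]
  · rintro ⟨J, τ⟩ -
    rfl


open Matrix in
theorem gram_det_eq {p s q : ℕ} (Bm : Matrix (Fin p) (Fin q) ℤ) (Mm : Matrix (Fin s) (Fin q) ℤ)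
    (Vm : Matrix (Fin s) (Fin q) ℤ) (Pm : Matrix (Fin p) (Fin q) ℤ)
    (e : (Fin p ⊕ Fin s) ≃ Fin q)
    (h1 : Mm * Bmᵀ = 0) (h2 : Mm * Vmᵀ = 1) (h3 : Pm * Bmᵀ = 1) :
    det (Bm * Bmᵀ) = det (Mm * Mmᵀ) := by
  classical
  have key : ∀ X Y : Matrix (Fin p ⊕ Fin s) (Fin q) ℤ,
      det (X.submatrix id ⇑e) * det (Y.submatrix id ⇑e) = det (X * Yᵀ) := by
    intro X Y
    have : (X.submatrix id ⇑e) * (Y.submatrix id ⇑e)ᵀ = X * Yᵀ := by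
      ext i j
      simp only [mul_apply, transpose_apply, submatrix_apply, id_eq]
      exact Fintype.sum_equiv e _ _ fun k => rfl
    calc det (X.submatrix id ⇑e) * det (Y.submatrix id ⇑e)
        = det ((X.submatrix id ⇑e) * (Y.submatrix id ⇑e)ᵀ) := by
          rw [det_mul, det_transpose]
      _ = det (X * Yᵀ) := by rw [this]
  have hS := key (fromRows Bm Mm) (fromRows Bm Vm)
  have hT := key (fromRows Pm Mm) (fromRows Bm Vm)
  have hTS := key (fromRows Pm Mm) (fromRows Bm Mm)
  rw [transpose_fromRows, fromRows_mul_fromCols, h1, h2,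
    det_fromBlocks_zero₂₁, det_one, mul_one] at hS
  rw [transpose_fromRows, fromRows_mul_fromCols, h1, h2, h3,
    det_fromBlocks_zero₂₁] at hT
  simp only [det_one, one_mul] at hT
  rw [transpose_fromRows, fromRows_mul_fromCols, h1, h3,
    det_fromBlocks_zero₂₁, det_one, one_mul] at hTS
  set t := det ((fromRows Pm Mm).submatrix id ⇑e) with ht
  set u := det ((fromRows Bm Vm).submatrix id ⇑e) with hu
  set s' := det ((fromRows Bm Mm).submatrix id ⇑e) with hs
  have ht2 : t * t = 1 := by
    rcases Int.isUnit_iff.mp (IsUnit.of_mul_eq_one (a := t) u hT) with h | h <;> rw [h] <;> ring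
  calc det (Bm * Bmᵀ) = s' * u := hS.symm
    _ = (t * t) * (s' * u) := by rw [ht2, one_mul]
    _ = (t * s') * (t * u) := by ring
    _ = det (Mm * Mmᵀ) := by rw [hT, hTS, mul_one]


noncomputable section

/-- The cons equivalence `ℤ × ℤ^n ≃ ℤ^{n+1}`. -/
def consLinEquiv (n : ℕ) : (ℤ × (Fin n → ℤ)) ≃ₗ[ℤ] (Fin (n + 1) → ℤ) where
  toFun p := Fin.cons p.1 p.2
  invFun f := (f 0, fun k => f k.succ)
  map_add' x y := by
    ext i
    refine Fin.cases ?_ ?_ i <;> simp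
  map_smul' c x := by
    ext i
    refine Fin.cases ?_ ?_ i <;> simp
  left_inv x := by simp
  right_inv f := by
    ext i
    refine Fin.cases ?_ ?_ i <;> simp


theorem eta_surj (n N : ℕ) (a : Fin (N + 1) → Fin n → ℤ)
    (hgen : Submodule.span ℤ (Set.range fun j => a j - a 0) = ⊤) :
    LinearMap.range (etaLin n N a) = ⊤ := by
  rw [LinearMap.range_eq_top]
  rintro ⟨t, y⟩
  have hw : y - t • a 0 ∈ Submodule.span ℤ (Set.range fun j => a j - a 0) := by
    rw [hgen]; trivial
  obtain ⟨c, hc⟩ := (Submodule.mem_span_range_iff_exists_fun ℤ).mp hw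
  have hc' : ∑ i, c i • a i = y - t • a 0 + (∑ i, c i) • a 0 := by
    have h0 : ∑ i, c i • (a i - a 0) = ∑ i, c i • a i - (∑ i, c i) • a 0 := by
      rw [Finset.sum_smul]
      rw [← Finset.sum_sub_distrib]
      congr 1
      ext i
      rw [smul_sub]
    rw [h0] at hc
    rw [← hc]
    abel
  refine ⟨c + (t - ∑ i, c i) • Pi.single 0 1, ?_⟩
  have hsingle : etaLin n N a (Pi.single 0 1) = (1, a 0) := by
    simp only [etaLin, LinearMap.coe_mk, AddHom.coe_mk]
    rw [Prod.mk.injEq]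
    refine ⟨by simp, ?_⟩
    rw [Finset.sum_eq_single 0]
    · simp
    · intro i _ hi; simp [Pi.single_apply, hi]
    · simp
  rw [map_add, map_smul, hsingle]
  have hceq : etaLin n N a c = (∑ i, c i, ∑ i, c i • a i) := rfl
  rw [hceq, Prod.smul_mk, Prod.mk_add_mk, Prod.mk.injEq]
  refine ⟨by simp only [smul_eq_mul]; ring, ?_⟩
  rw [hc']
  module



open Matrix in
/-- the covolume of the lattice `Γ_A = ker η_A` in the real
subspace `W = ker(η_A ⊗ ℝ)` (computed, via the Gram determinant, from any
`ℤ`-basis of `Γ_A`) equals `(Σ_J det(M_J)²)^{1/2}`, where `M` is the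
`(n+1)×(N+1)` matrix whose `j`-th column is `(1, a_j)`. -/
theorem covolume_eq_sqrt_sum_sq_minors
    (n N : ℕ) (hn : 0 < n) (hnN : n < N)
    (a : Fin (N + 1) → Fin n → ℤ)
    (hgen : Submodule.span ℤ (Set.range fun j => a j - a 0) = ⊤)
    (b : Module.Basis (Fin (N - n)) ℤ (LinearMap.ker (etaLin n N a))) :
    Real.sqrt (Matrix.det (Matrix.of fun i j : Fin (N - n) =>
        ∑ k, ((b i : Fin (N + 1) → ℤ) k : ℝ) * ((b j : Fin (N + 1) → ℤ) k : ℝ))) =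
      Real.sqrt (minorSumSq n N
        (Matrix.of fun (r : Fin (n + 1)) (c : Fin (N + 1)) =>
          (Fin.cons (1 : ℝ) (fun k => (a c k : ℝ)) : Fin (n + 1) → ℝ) r)) := by
  classical
  classical
  obtain ⟨σl, hσ⟩ := (etaLin n N a).exists_rightInverse_of_surjective (eta_surj n N a hgen)
  have hσ' : ∀ z, (etaLin n N a) (σl z) = z := fun z => by
    have := LinearMap.ext_iff.mp hσ z
    simpa using this
  set E := consLinEquiv n with hE
  set Mm : Matrix (Fin (n+1)) (Fin (N+1)) ℤ := Matrix.of (fun r c => (Fin.cons (1:ℤ) (a c) : Fin (n+1) → ℤ) r) with hMm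
  set Bm : Matrix (Fin (N-n)) (Fin (N+1)) ℤ := Matrix.of (fun i c => (b i : Fin (N+1) → ℤ) c) with hBm
  set Vm : Matrix (Fin (n+1)) (Fin (N+1)) ℤ :=
    Matrix.of (fun s c => σl (E.symm (Pi.single s 1)) c) with hVm
  set πsub : (Fin (N+1) → ℤ) →ₗ[ℤ] (Fin (N+1) → ℤ) := LinearMap.id - σl ∘ₗ (etaLin n N a) with hπsub
  have hker : ∀ x : Fin (N+1) → ℤ, πsub x ∈ LinearMap.ker (etaLin n N a) := by
    intro x
    rw [LinearMap.mem_ker, hπsub]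
    simp only [LinearMap.sub_apply, LinearMap.id_apply, LinearMap.comp_apply]
    rw [map_sub, hσ' ((etaLin n N a) x), sub_self]
  set πl : (Fin (N+1) → ℤ) →ₗ[ℤ] ↥(LinearMap.ker (etaLin n N a)) :=
    LinearMap.codRestrict (LinearMap.ker (etaLin n N a)) πsub hker with hπl
  set Pm : Matrix (Fin (N-n)) (Fin (N+1)) ℤ :=
    Matrix.of (fun i c => b.coord i (πl (Pi.single c 1))) with hPm
  have hrow : ∀ (lam : Fin (N+1) → ℤ) (r : Fin (n+1)), ∑ c, Mm r c * lam c = E ((etaLin n N a) lam) r := by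
    intro lam r
    have hEeta : E ((etaLin n N a) lam) = Fin.cons (∑ i, lam i) (∑ i, lam i • a i) := rfl
    rw [hEeta]
    refine Fin.cases ?_ ?_ r
    · simp [hMm]
    · intro k
      simp only [hMm, Matrix.of_apply, Fin.cons_succ, Finset.sum_apply, Pi.smul_apply,
        smul_eq_mul]
      exact Finset.sum_congr rfl fun c _ => mul_comm _ _
  have hdecomp : ∀ (x : Fin (N+1) → ℤ), ∑ c, x c • Pi.single c (1:ℤ) = x := by
    intro x
    have h : ∀ c : Fin (N+1), x c • (Pi.single c (1:ℤ) : Fin (N+1) → ℤ) = (Pi.single c (x c) : Fin (N+1) → ℤ) := by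
      intro c
      ext j
      by_cases hj : j = c <;> simp [Pi.single_apply, hj]
    simp_rw [h]
    exact Finset.univ_sum_single x
  have h1 : Mm * Bmᵀ = 0 := by
    ext r i
    rw [Matrix.mul_apply]
    have : ∑ j, Mm r j * Bmᵀ j i = ∑ j, Mm r j * (b i : Fin (N+1) → ℤ) j :=
      Finset.sum_congr rfl fun j _ => rfl
    rw [this, hrow]
    have : (etaLin n N a) ((b i : Fin (N+1) → ℤ)) = 0 := (b i).2
    rw [this, map_zero]
    rfl
  have h2 : Mm * Vmᵀ = 1 := by
    ext r s
    rw [Matrix.mul_apply]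
    have : ∑ j, Mm r j * Vmᵀ j s = ∑ j, Mm r j * (σl (E.symm (Pi.single s 1))) j :=
      Finset.sum_congr rfl fun j _ => rfl
    rw [this, hrow, hσ', LinearEquiv.apply_symm_apply]
    rw [Pi.single_apply, Matrix.one_apply]
  have h3 : Pm * Bmᵀ = 1 := by
    ext i j
    rw [Matrix.mul_apply]
    set g : (Fin (N+1) → ℤ) →ₗ[ℤ] ℤ := (b.coord i) ∘ₗ πl with hg
    have hgapp : ∀ c, Pm i c = g (Pi.single c 1) := fun c => rfl
    have : ∑ c, Pm i c * Bmᵀ c j = ∑ c, (b j : Fin (N+1) → ℤ) c • g (Pi.single c 1) := by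
      refine Finset.sum_congr rfl fun c _ => ?_
      rw [hgapp, smul_eq_mul, mul_comm]
      rfl
    have h4 : ∑ c, (b j : Fin (N+1) → ℤ) c • g (Pi.single c 1) =
        g (∑ c, (b j : Fin (N+1) → ℤ) c • Pi.single c (1:ℤ)) := by
      rw [map_sum]
      exact Finset.sum_congr rfl fun c _ => (LinearMap.map_smul g _ _).symm
    rw [this, h4, hdecomp]
    have h5 : πl ((b j : Fin (N+1) → ℤ)) = b j := by
      apply Subtype.ext
      have : (etaLin n N a) ((b j : Fin (N+1) → ℤ)) = 0 := (b j).2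
      simp [hπl, hπsub, LinearMap.codRestrict, this]
    have h6 : g ((b j : Fin (N+1) → ℤ)) = b.repr (b j) i := by
      rw [hg]
      simp only [LinearMap.comp_apply, h5, Module.Basis.coord_apply]
    rw [h6, Module.Basis.repr_self, Finsupp.single_apply, Matrix.one_apply]
    exact if_congr eq_comm rfl rfl

  -- the integer identity
  have e : (Fin (N - n) ⊕ Fin (n + 1)) ≃ Fin (N + 1) :=
    finSumFinEquiv.trans (finCongr (by omega))
  have hZ : (Bm * Bmᵀ).det = (Mm * Mmᵀ).det := gram_det_eq Bm Mm Vm Pm e h1 h2 h3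
  -- cast to ℝ
  set f := Int.castRingHom ℝ with hf
  set Mr : Matrix (Fin (n + 1)) (Fin (N + 1)) ℝ :=
    Matrix.of fun (r : Fin (n + 1)) (c : Fin (N + 1)) =>
      (Fin.cons (1 : ℝ) (fun k => (a c k : ℝ)) : Fin (n + 1) → ℝ) r with hMr
  have hA : (Matrix.of fun i j : Fin (N - n) =>
      ∑ k, ((b i : Fin (N + 1) → ℤ) k : ℝ) * ((b j : Fin (N + 1) → ℤ) k : ℝ))
      = f.mapMatrix (Bm * Bmᵀ) := by
    ext i j
    simp only [Matrix.of_apply, RingHom.mapMatrix_apply, Matrix.map_apply, Matrix.mul_apply,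
      Matrix.transpose_apply, hBm, hf, map_sum, _root_.map_mul, Int.coe_castRingHom]
    push_cast
    rfl
  have hMcast : Mr = Mm.map ⇑f := by
    ext r c
    refine Fin.cases ?_ (fun k => ?_) r <;>
      simp [hMr, hMm, hf]
  apply congrArg Real.sqrt
  calc Matrix.det (Matrix.of fun i j : Fin (N - n) =>
        ∑ k, ((b i : Fin (N + 1) → ℤ) k : ℝ) * ((b j : Fin (N + 1) → ℤ) k : ℝ))
      = Matrix.det (f.mapMatrix (Bm * Bmᵀ)) := by rw [hA]
    _ = f ((Bm * Bmᵀ).det) := (RingHom.map_det f _).symm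
    _ = f ((Mm * Mmᵀ).det) := by rw [hZ]
    _ = Matrix.det (f.mapMatrix (Mm * Mmᵀ)) := RingHom.map_det f _
    _ = Matrix.det (Mr * Mrᵀ) := by
        have hmm : f.mapMatrix (Mm * Mmᵀ) = (Mm.map ⇑f) * (Mm.map ⇑f)ᵀ := by
          rw [RingHom.mapMatrix_apply, Matrix.map_mul, Matrix.transpose_map]
        rw [hmm, ← hMcast]
    _ = minorSumSq n N Mr := by
        rw [my_cauchy_binet Mr Mrᵀ]
        unfold minorSumSq
        refine Finset.sum_congr rfl fun J _ => ?_
        rw [pow_two]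
        congr 1
        have : Mrᵀ.submatrix (fun k => ((J.1.orderIsoOfFin (Finset.mem_powersetCard.mp J.2).2 k : J.1) : Fin (N + 1))) id
            = (Mr.submatrix id (fun k => ((J.1.orderIsoOfFin (Finset.mem_powersetCard.mp J.2).2 k : J.1) : Fin (N + 1))))ᵀ := rfl
        rw [this, det_transpose]


end
end
end

section
/- Let K be a number field, n, N positive integers, A = (a_0,…,a_N) a tuple of vectors in ℤ^n, and α = (α_0,…,α_N) ∈ (K^×)^{N+1}. Suppose there exists a ∈ {a_0,…,a_N} such that for every place w of K (finite or infinite), max_{0 ≤ i ≤ N} ‖α_i‖_w = max{‖α_ℓ‖_w : 0 ≤ ℓ ≤ N, a_ℓ = a}. Then for every s = (s_1,…,s_n) ∈ (K^×)^n one has logH(α_0 s^{a_0}, α_1 s^{a_1}, …, α_N s^{a_N}) ≥ logH(α_0, α_1, …, α_N), where s^{a_i} := ∏_{k=1}^n s_k^{(a_i)_k}. -/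
noncomputable section

/-- The logarithmic Weil height `logH(x) = Σ_w log max_i ‖x_i‖_w` of a tuple
`x = (x_0,…,x_m)`, relative to a family of absolute values `‖·‖_w` of `K`
indexed by the places `w ∈ V`. -/
def logHeight {K : Type*} [Field K] {V : Type*} (w : V → AbsoluteValue K ℝ)
    {m : ℕ} (x : Fin (m + 1) → K) : ℝ :=
  ∑ᶠ v, Real.log (Finset.univ.sup' Finset.univ_nonempty fun i => w v (x i))

/-- key step of Lemma VI.2: let `K` be a number field with
its places represented by a family of absolute values satisfying the product
formula. If there is `a ∈ {a_0,…,a_N}` such that at every place the maximum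
of the `‖α_i‖_w` is attained at an index `ℓ` with `a_ℓ = a`, then every point
`(α_0 s^{a_0}, …, α_N s^{a_N})` of the principal orbit has logarithmic Weil
height at least that of `α`. -/
theorem logHeight_orbit_point_ge
    {K : Type*} [Field K] [NumberField K]
    {V : Type*} (w : V → AbsoluteValue K ℝ)
    (hfin : ∀ x : Kˣ, (Function.mulSupport fun v => w v (x : K)).Finite)
    (hprod : ∀ x : Kˣ, ∏ᶠ v, w v (x : K) = 1)
    (n N : ℕ) (hn : 0 < n) (hN : 0 < N)
    (a : Fin (N + 1) → Fin n → ℤ) (α : Fin (N + 1) → Kˣ)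
    (i₀ : Fin (N + 1))
    (hmax : ∀ v : V, ∃ ℓ : Fin (N + 1), a ℓ = a i₀ ∧
      ∀ i, w v (α i : K) ≤ w v (α ℓ : K))
    (s : Fin n → Kˣ) :
    logHeight w (fun i => (α i : K)) ≤
      logHeight w (fun i => (α i : K) * ∏ k, (s k : K) ^ (a i k)) := by
  classical
  set β : Fin (N + 1) → Kˣ := fun i => α i * ∏ k, s k ^ a i k with hβ
  set u : Kˣ := ∏ k, s k ^ a i₀ k with hu
  have hβcoe : ∀ i, (β i : K) = (α i : K) * ∏ k, (s k : K) ^ a i k := by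
    intro i; simp [hβ]
  have hucoe : (u : K) = ∏ k, (s k : K) ^ a i₀ k := by simp [hu]
  have hwpos : ∀ (v : V) (x : Kˣ), 0 < w v (x : K) := fun v x => (w v).pos x.ne_zero
  set F : V → ℝ := fun v =>
    Real.log (Finset.univ.sup' Finset.univ_nonempty fun i => w v (α i : K)) with hF
  set G : V → ℝ := fun v =>
    Real.log (Finset.univ.sup' Finset.univ_nonempty fun i => w v (β i : K)) with hG
  set L : V → ℝ := fun v => Real.log (w v (u : K)) with hL
  set T : Finset V := (hfin u).toFinset ∪
    Finset.univ.biUnion (fun i => (hfin (α i)).toFinset ∪ (hfin (β i)).toFinset) with hT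
  have hnotT : ∀ v ∉ T, (w v (u : K) = 1) ∧ (∀ i, w v (α i : K) = 1) ∧
      (∀ i, w v (β i : K) = 1) := by
    intro v hv
    simp only [hT, Finset.mem_union, Finset.mem_biUnion, Finset.mem_univ, true_and,
      Set.Finite.mem_toFinset, Function.mem_mulSupport, not_or, not_exists] at hv
    exact ⟨not_not.mp hv.1, fun i => not_not.mp (hv.2 i).1, fun i => not_not.mp (hv.2 i).2⟩
  have hsup1 : ∀ (g : Fin (N + 1) → ℝ), (∀ i, g i = 1) →
      Finset.univ.sup' Finset.univ_nonempty g = 1 := by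
    intro g hg
    refine le_antisymm (Finset.sup'_le _ _ fun i _ => le_of_eq (hg i)) ?_
    exact le_trans (le_of_eq (hg i₀).symm) (Finset.le_sup' g (Finset.mem_univ i₀))
  have hFsub : Function.support F ⊆ (T : Set V) := by
    intro v hv
    by_contra hvT
    exact hv (by simp [hF, hsup1 _ ((hnotT v hvT).2.1)])
  have hGsub : Function.support G ⊆ (T : Set V) := by
    intro v hv
    by_contra hvT
    exact hv (by simp [hG, hsup1 _ ((hnotT v hvT).2.2)])
  have husub : (Function.mulSupport fun v => w v (u : K)) ⊆ (T : Set V) := by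
    intro v hv
    by_contra hvT
    exact hv (hnotT v hvT).1
  have hsuppos : ∀ v, 0 < Finset.univ.sup' Finset.univ_nonempty fun i => w v (α i : K) := by
    intro v
    exact lt_of_lt_of_le (hwpos v (α i₀)) (Finset.le_sup' (fun i => w v (α i : K)) (Finset.mem_univ i₀))
  -- pointwise inequality
  have hpt : ∀ v, F v + L v ≤ G v := by
    intro v
    obtain ⟨ℓ, hℓa, hℓ⟩ := hmax v
    have h1 : (Finset.univ.sup' Finset.univ_nonempty fun i => w v (α i : K)) = w v (α ℓ : K) :=
      le_antisymm (Finset.sup'_le _ _ fun i _ => hℓ i) (Finset.le_sup' (fun i => w v (α i : K)) (Finset.mem_univ ℓ))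
    have h2 : (β ℓ : K) = (α ℓ : K) * (u : K) := by
      rw [hβcoe, hucoe, hℓa]
    have h3 : Real.log (w v (β ℓ : K)) ≤ G v := by
      apply Real.log_le_log (hwpos v (β ℓ))
      exact Finset.le_sup' (fun i => w v (β i : K)) (Finset.mem_univ ℓ)
    calc F v + L v = Real.log (w v (α ℓ : K)) + Real.log (w v (u : K)) := by simp only [hF, hL]; rw [h1]
      _ = Real.log (w v (α ℓ : K) * w v (u : K)) :=
          (Real.log_mul (hwpos v (α ℓ)).ne' (hwpos v u).ne').symm
      _ = Real.log (w v (β ℓ : K)) := by rw [h2, map_mul]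
      _ ≤ G v := h3
  -- sums over T
  have hLsum : ∑ v ∈ T, L v = 0 := by
    have h1 : ∑ v ∈ T, L v = Real.log (∏ v ∈ T, w v (u : K)) :=
      (Real.log_prod fun v _ => (hwpos v u).ne').symm
    have h2 : ∏ v ∈ T, w v (u : K) = 1 := by
      rw [← finprod_eq_finset_prod_of_mulSupport_subset _ husub]
      exact hprod u
    rw [h1, h2, Real.log_one]
  have hFsum : logHeight w (fun i => (α i : K)) = ∑ v ∈ T, F v :=
    finsum_eq_finset_sum_of_support_subset F hFsub
  have hGsum : logHeight w (fun i => (α i : K) * ∏ k, (s k : K) ^ (a i k)) = ∑ v ∈ T, G v := by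
    have : (fun i => (α i : K) * ∏ k, (s k : K) ^ (a i k)) = fun i => (β i : K) := by
      funext i; rw [hβcoe]
    rw [show logHeight w (fun i => (α i : K) * ∏ k, (s k : K) ^ (a i k)) = ∑ᶠ v, G v from
      finsum_congr fun v => by
        rw [hG]
        congr 1
        exact Finset.sup'_congr _ rfl fun i _ => by simp only [hβcoe]]
    exact finsum_eq_finset_sum_of_support_subset G hGsub
  rw [hFsum, hGsum]
  calc ∑ v ∈ T, F v = ∑ v ∈ T, F v + ∑ v ∈ T, L v := by rw [hLsum, add_zero]
    _ = ∑ v ∈ T, (F v + L v) := (Finset.sum_add_distrib).symm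
    _ ≤ ∑ v ∈ T, G v := Finset.sum_le_sum fun v _ => hpt v

end
end
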